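/- arXiv:1502.05443 — 2 statements merged into one kernel-verified Lean document; each statement's English description precedes it below -/
import Mathlib

section
/- For every influence I, every k ∈ ℕ, every depth-k local policy π, and every local state x ∈ X: max_{d∈D} ν^I_k(π)(x,d) ≤ ν^IO_k(π)(x). -/
/-!
Induction on the horizon. At each observation the influence-induced backup averages, with the
weights `I(· | d)`, the one-step backups obtained by fixing the influence-source value `u`;
such an average never exceeds the best `u`, which is the optimistic backup, and the
continuation values are compared by the induction hypothesis since all kernels are nonnegative.
-/

open Finset

section LocalModel

variable {Xl Xn A O U D : Type*}
  [Fintype Xl] [Nonempty Xl] [Fintype Xn] [Nonempty Xn]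
  [Fintype A] [Nonempty A] [Fintype O] [Nonempty O]
  [Fintype U] [Nonempty U] [Fintype D] [Nonempty D]

/-- Influence-induced value vectors `ν^I_k(π)(x,d)` of the influence-augmented
sub-problem. A depth-`k` local policy is a function `List O → A`; `π []` is its action
at the empty history and `fun h => π (o :: h)` is the subtree policy `π↓o`. -/
noncomputable def nuI (Pl : Xl → (Xl × Xn) → A → ℝ) (Pn : Xn → (Xl × Xn) → A → U → ℝ)
    (Ω : O → A → (Xl × Xn) → ℝ) (δ : (Xl × Xn) → D → A → (Xl × Xn) → D)
    (r : A → (Xl × Xn) → ℝ) (I : D → U → ℝ) :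
    ℕ → (List O → A) → (Xl × Xn) → D → ℝ
  | 0 => fun _ _ _ => 0
  | k + 1 => fun π x d =>
      r (π []) x + ∑ o : O, ∑ x' : Xl × Xn,
        Ω o (π []) x' * Pl x'.1 x (π []) *
          (∑ u : U, Pn x'.2 x (π []) u * I d u) *
          nuI Pl Pn Ω δ r I k (fun h => π (o :: h)) x' (δ x d (π []) x')

/-- Influence-optimistic (IO, Q-MPOMDP style) value vectors `ν^IO_k(π)(x)`. -/
noncomputable def nuIO (Pl : Xl → (Xl × Xn) → A → ℝ) (Pn : Xn → (Xl × Xn) → A → U → ℝ)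
    (Ω : O → A → (Xl × Xn) → ℝ) (r : A → (Xl × Xn) → ℝ) :
    ℕ → (List O → A) → (Xl × Xn) → ℝ
  | 0 => fun _ _ => 0
  | k + 1 => fun π x =>
      r (π []) x + ∑ o : O,
        Finset.univ.sup' Finset.univ_nonempty (fun u : U =>
          ∑ x' : Xl × Xn,
            Ω o (π []) x' * Pl x'.1 x (π []) * Pn x'.2 x (π []) u *
              nuIO Pl Pn Ω r k (fun h => π (o :: h)) x')

end LocalModel

theorem Finset.sum_mul_le_sup'_of_sum_eq_one {ι : Type*} [Fintype ι] [Nonempty ι]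
    (w f : ι → ℝ) (hw₀ : ∀ i, 0 ≤ w i) (hw₁ : ∑ i, w i = 1) :
    ∑ i, w i * f i ≤ univ.sup' univ_nonempty f := by
  have hcm : univ.centerMass w f = ∑ i, w i * f i := centerMass_eq_of_sum_1 _ _ hw₁
  rw [← hcm]
  exact centerMass_le_sup (fun i _ => hw₀ i) (by rw [hw₁]; exact one_pos)

theorem Finset.sum_mul_sum_mul_comm {α ι R : Type*} [Fintype α] [Fintype ι] [CommSemiring R]
    (a b : α → R) (p : α → ι → R) (w : ι → R) :
    ∑ x, a x * (∑ i, p x i * w i) * b x = ∑ i, w i * ∑ x, a x * p x i * b x := by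
  simp_rw [mul_sum, sum_mul]
  rw [sum_comm]
  exact sum_congr rfl fun i _ => sum_congr rfl fun x _ => by ring

section Domination

variable {Xl Xn A O U D : Type*} [Fintype Xl] [Fintype Xn] [Fintype O] [Fintype U] [Nonempty U]

theorem nuI_apply_le_nuIO
    (Pl : Xl → (Xl × Xn) → A → ℝ) (Pn : Xn → (Xl × Xn) → A → U → ℝ)
    (Ω : O → A → (Xl × Xn) → ℝ) (δ : (Xl × Xn) → D → A → (Xl × Xn) → D)
    (r : A → (Xl × Xn) → ℝ)
    (hPl0 : ∀ x'l x a, 0 ≤ Pl x'l x a) (hPn0 : ∀ x'n x a u, 0 ≤ Pn x'n x a u)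
    (hΩ0 : ∀ o a x', 0 ≤ Ω o a x')
    (I : D → U → ℝ) (hI0 : ∀ d u, 0 ≤ I d u) (hI1 : ∀ d, ∑ u : U, I d u = 1)
    (k : ℕ) (π : List O → A) (x : Xl × Xn) (d : D) :
    nuI Pl Pn Ω δ r I k π x d ≤ nuIO Pl Pn Ω r k π x := by
  induction k generalizing π x d with
  | zero => exact le_rfl
  | succ k ih =>
    simp only [nuI, nuIO]
    gcongr with o
    set a := π []
    calc ∑ x', Ω o a x' * Pl x'.1 x a * (∑ u, Pn x'.2 x a u * I d u) *
            nuI Pl Pn Ω δ r I k (fun h => π (o :: h)) x' (δ x d a x')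
        = ∑ u, I d u * ∑ x', Ω o a x' * Pl x'.1 x a * Pn x'.2 x a u *
            nuI Pl Pn Ω δ r I k (fun h => π (o :: h)) x' (δ x d a x') :=
          sum_mul_sum_mul_comm (fun x' => Ω o a x' * Pl x'.1 x a) _ (fun x' u => Pn x'.2 x a u) _
      _ ≤ ∑ u, I d u * ∑ x', Ω o a x' * Pl x'.1 x a * Pn x'.2 x a u *
            nuIO Pl Pn Ω r k (fun h => π (o :: h)) x' := by
          gcongr with u _ x' _
          · exact hI0 d u
          · exact mul_nonneg (mul_nonneg (hΩ0 o a x') (hPl0 x'.1 x a)) (hPn0 x'.2 x a u)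
          · exact ih _ _ _
      _ ≤ _ := sum_mul_le_sup'_of_sum_eq_one _ _ (hI0 d) (hI1 d)

end Domination

section LocalModel

variable {Xl Xn A O U D : Type*}
  [Fintype Xl] [Nonempty Xl] [Fintype Xn] [Nonempty Xn]
  [Fintype A] [Nonempty A] [Fintype O] [Nonempty O]
  [Fintype U] [Nonempty U] [Fintype D] [Nonempty D]

theorem nuI_le_nuIO_general
    (Pl : Xl → (Xl × Xn) → A → ℝ) (Pn : Xn → (Xl × Xn) → A → U → ℝ)
    (Ω : O → A → (Xl × Xn) → ℝ) (δ : (Xl × Xn) → D → A → (Xl × Xn) → D)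
    (r : A → (Xl × Xn) → ℝ)
    (hPl0 : ∀ x'l x a, 0 ≤ Pl x'l x a)
    (hPn0 : ∀ x'n x a u, 0 ≤ Pn x'n x a u)
    (hΩ0 : ∀ o a x', 0 ≤ Ω o a x')
    (I : D → U → ℝ) (hI0 : ∀ d u, 0 ≤ I d u) (hI1 : ∀ d, ∑ u : U, I d u = 1)
    (k : ℕ) (π : List O → A) (x : Xl × Xn) :
    Finset.univ.sup' Finset.univ_nonempty (fun d : D => nuI Pl Pn Ω δ r I k π x d) ≤
      nuIO Pl Pn Ω r k π x :=
  sup'_le _ _ fun d _ => nuI_apply_le_nuIO Pl Pn Ω δ r hPl0 hPn0 hΩ0 I hI0 hI1 k π x d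

/-- the influence-optimistic value vectors pointwise dominate the
influence-induced value vectors, uniformly over d-separating-set values. -/
theorem nuI_le_nuIO
    (Pl : Xl → (Xl × Xn) → A → ℝ) (Pn : Xn → (Xl × Xn) → A → U → ℝ)
    (Ω : O → A → (Xl × Xn) → ℝ) (δ : (Xl × Xn) → D → A → (Xl × Xn) → D)
    (r : A → (Xl × Xn) → ℝ)
    (hPl0 : ∀ x'l x a, 0 ≤ Pl x'l x a) (hPl1 : ∀ x a, ∑ x'l : Xl, Pl x'l x a = 1)
    (hPn0 : ∀ x'n x a u, 0 ≤ Pn x'n x a u) (hPn1 : ∀ x a u, ∑ x'n : Xn, Pn x'n x a u = 1)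
    (hΩ0 : ∀ o a x', 0 ≤ Ω o a x') (hΩ1 : ∀ a x', ∑ o : O, Ω o a x' = 1)
    (I : D → U → ℝ) (hI0 : ∀ d u, 0 ≤ I d u) (hI1 : ∀ d, ∑ u : U, I d u = 1)
    (k : ℕ) (π : List O → A) (x : Xl × Xn) :
    Finset.univ.sup' Finset.univ_nonempty (fun d : D => nuI Pl Pn Ω δ r I k π x d) ≤
      nuIO Pl Pn Ω r k π x :=
  nuI_le_nuIO_general Pl Pn Ω δ r hPl0 hPn0 hΩ0 I hI0 hI1 k π x

end LocalModel
end

section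
/- For every influence I, every k ∈ ℕ, and every belief b : X × D → ℝ that is nonnegative and sums to 1, with marginal b_IO(x) = Σ_{d∈D} b(x,d): sup_π Σ_{(x,d)∈X×D} b(x,d)·ν^I_k(π)(x,d) ≤ sup_π Σ_{x∈X} b_IO(x)·ν^IO_k(π)(x), where both suprema range over all depth-k local policies (these suprema are finite, since all value vectors are uniformly bounded in absolute value by k times the maximum absolute reward). -/
open Finset

section LocalModel

variable {Xl Xn A O U D : Type*}
  [Fintype Xl] [Nonempty Xl] [Fintype Xn] [Nonempty Xn]
  [Fintype A] [Nonempty A] [Fintype O] [Nonempty O]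
  [Fintype U] [Nonempty U] [Fintype D] [Nonempty D]

private lemma nuI_le_nuIO_aux
    (Pl : Xl → (Xl × Xn) → A → ℝ) (Pn : Xn → (Xl × Xn) → A → U → ℝ)
    (Ω : O → A → (Xl × Xn) → ℝ) (δ : (Xl × Xn) → D → A → (Xl × Xn) → D)
    (r : A → (Xl × Xn) → ℝ)
    (hPl0 : ∀ x'l x a, 0 ≤ Pl x'l x a)
    (hPn0 : ∀ x'n x a u, 0 ≤ Pn x'n x a u)
    (hΩ0 : ∀ o a x', 0 ≤ Ω o a x')
    (I : D → U → ℝ) (hI0 : ∀ d u, 0 ≤ I d u) (hI1 : ∀ d, ∑ u : U, I d u = 1) :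
    ∀ (k : ℕ) (π : List O → A) (x : Xl × Xn) (d : D),
      nuI Pl Pn Ω δ r I k π x d ≤ nuIO Pl Pn Ω r k π x := by
  intro k
  induction k with
  | zero => intro π x d; simp [nuI, nuIO]
  | succ k ih =>
    intro π x d
    simp only [nuI, nuIO]
    gcongr with o _
    set a := π [] with ha
    set S := Finset.univ.sup' Finset.univ_nonempty (fun u : U =>
      ∑ x' : Xl × Xn,
        Ω o a x' * Pl x'.1 x a * Pn x'.2 x a u *
          nuIO Pl Pn Ω r k (fun h => π (o :: h)) x') with hS
    calc ∑ x' : Xl × Xn,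
          Ω o a x' * Pl x'.1 x a * (∑ u : U, Pn x'.2 x a u * I d u) *
            nuI Pl Pn Ω δ r I k (fun h => π (o :: h)) x' (δ x d a x')
        ≤ ∑ x' : Xl × Xn,
          Ω o a x' * Pl x'.1 x a * (∑ u : U, Pn x'.2 x a u * I d u) *
            nuIO Pl Pn Ω r k (fun h => π (o :: h)) x' := by
          refine Finset.sum_le_sum fun x' _ => ?_
          refine mul_le_mul_of_nonneg_left (ih _ _ _) ?_
          have : 0 ≤ ∑ u : U, Pn x'.2 x a u * I d u :=
            Finset.sum_nonneg fun u _ => mul_nonneg (hPn0 _ _ _ _) (hI0 _ _)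
          exact mul_nonneg (mul_nonneg (hΩ0 _ _ _) (hPl0 _ _ _)) this
      _ = ∑ u : U, I d u * ∑ x' : Xl × Xn,
            Ω o a x' * Pl x'.1 x a * Pn x'.2 x a u *
              nuIO Pl Pn Ω r k (fun h => π (o :: h)) x' := by
          simp only [Finset.sum_mul, Finset.mul_sum, Finset.mul_sum]
          rw [Finset.sum_comm]
          refine Finset.sum_congr rfl fun u _ => Finset.sum_congr rfl fun x' _ => ?_
          ring
      _ ≤ ∑ u : U, I d u * S := by
          refine Finset.sum_le_sum fun u _ => ?_
          exact mul_le_mul_of_nonneg_left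
            (Finset.le_sup' (f := fun u : U =>
              ∑ x' : Xl × Xn,
                Ω o a x' * Pl x'.1 x a * Pn x'.2 x a u *
                  nuIO Pl Pn Ω r k (fun h => π (o :: h)) x') (Finset.mem_univ u)) (hI0 _ _)
      _ = S := by rw [← Finset.sum_mul, hI1, one_mul]

private lemma nuIO_bounded_above
    (Pl : Xl → (Xl × Xn) → A → ℝ) (Pn : Xn → (Xl × Xn) → A → U → ℝ)
    (Ω : O → A → (Xl × Xn) → ℝ)
    (r : A → (Xl × Xn) → ℝ)
    (hPl0 : ∀ x'l x a, 0 ≤ Pl x'l x a) (hPl1 : ∀ x a, ∑ x'l : Xl, Pl x'l x a = 1)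
    (hPn0 : ∀ x'n x a u, 0 ≤ Pn x'n x a u) (hPn1 : ∀ x a u, ∑ x'n : Xn, Pn x'n x a u = 1)
    (hΩ0 : ∀ o a x', 0 ≤ Ω o a x') (hΩ1 : ∀ a x', ∑ o : O, Ω o a x' = 1) :
    ∀ k : ℕ, ∃ C : ℝ, 0 ≤ C ∧ ∀ (π : List O → A) (x : Xl × Xn),
      nuIO Pl Pn Ω r k π x ≤ C := by
  intro k
  induction k with
  | zero => exact ⟨0, le_refl 0, fun π x => by simp [nuIO]⟩
  | succ k ih =>
    obtain ⟨C, hC0, hC⟩ := ih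
    set M : ℝ := Finset.univ.sup' Finset.univ_nonempty
      (fun p : A × (Xl × Xn) => |r p.1 p.2|) with hM
    have hM0 : 0 ≤ M := le_trans (abs_nonneg _)
      (Finset.le_sup' (f := fun p : A × (Xl × Xn) => |r p.1 p.2|)
        (Finset.mem_univ (Classical.arbitrary _)))
    refine ⟨M + (Fintype.card O : ℝ) * C, by positivity, fun π x => ?_⟩
    simp only [nuIO]
    have hra : r (π []) x ≤ M :=
      le_trans (le_abs_self _)
        (Finset.le_sup' (f := fun p : A × (Xl × Xn) => |r p.1 p.2|)
          (Finset.mem_univ (π [], x)))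
    refine add_le_add hra ?_
    calc (∑ o : O,
          Finset.univ.sup' Finset.univ_nonempty (fun u : U =>
            ∑ x' : Xl × Xn,
              Ω o (π []) x' * Pl x'.1 x (π []) * Pn x'.2 x (π []) u *
                nuIO Pl Pn Ω r k (fun h => π (o :: h)) x'))
        ≤ ∑ _o : O, C := by
          refine Finset.sum_le_sum fun o _ => ?_
          refine Finset.sup'_le _ _ fun u _ => ?_
          have hΩle : ∀ x', Ω o (π []) x' ≤ 1 := by
            intro x'
            calc Ω o (π []) x' ≤ ∑ o' : O, Ω o' (π []) x' :=
                  Finset.single_le_sum (fun o' _ => hΩ0 o' _ x') (Finset.mem_univ o)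
              _ = 1 := hΩ1 _ _
          calc (∑ x' : Xl × Xn,
                Ω o (π []) x' * Pl x'.1 x (π []) * Pn x'.2 x (π []) u *
                  nuIO Pl Pn Ω r k (fun h => π (o :: h)) x')
              ≤ ∑ x' : Xl × Xn,
                Ω o (π []) x' * Pl x'.1 x (π []) * Pn x'.2 x (π []) u * C := by
                refine Finset.sum_le_sum fun x' _ => ?_
                refine mul_le_mul_of_nonneg_left (hC _ _) ?_
                have h1 := hΩ0 o (π []) x'
                have h2 := hPl0 x'.1 x (π [])
                have h3 := hPn0 x'.2 x (π []) u
                positivity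
            _ = (∑ x' : Xl × Xn,
                Ω o (π []) x' * Pl x'.1 x (π []) * Pn x'.2 x (π []) u) * C := by
                rw [Finset.sum_mul]
            _ ≤ 1 * C := by
                refine mul_le_mul_of_nonneg_right ?_ hC0
                calc (∑ x' : Xl × Xn,
                      Ω o (π []) x' * Pl x'.1 x (π []) * Pn x'.2 x (π []) u)
                    ≤ ∑ x' : Xl × Xn, Pl x'.1 x (π []) * Pn x'.2 x (π []) u := by
                      refine Finset.sum_le_sum fun x' _ => ?_
                      have h2 := hPl0 x'.1 x (π [])
                      have h3 := hPn0 x'.2 x (π []) u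
                      nlinarith [hΩle x', hΩ0 o (π []) x', mul_nonneg h2 h3]
                  _ = 1 := by
                      rw [Fintype.sum_prod_type]
                      simp only [← Finset.sum_mul, hPl1, ← Finset.mul_sum, hPn1]
                      simp [hPl1]
            _ = C := one_mul C
      _ = (Fintype.card O : ℝ) * C := by
          simp [Finset.sum_const, nsmul_eq_mul]

/-- for any belief `b` over augmented states, the optimal influence-induced
value is at most the optimal influence-optimistic value for the marginal belief
`b_IO x = ∑ d, b (x, d)`; the suprema range over all depth-`k` local policies. -/
theorem belief_value_nuI_le_nuIO
    (Pl : Xl → (Xl × Xn) → A → ℝ) (Pn : Xn → (Xl × Xn) → A → U → ℝ)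
    (Ω : O → A → (Xl × Xn) → ℝ) (δ : (Xl × Xn) → D → A → (Xl × Xn) → D)
    (r : A → (Xl × Xn) → ℝ)
    (hPl0 : ∀ x'l x a, 0 ≤ Pl x'l x a) (hPl1 : ∀ x a, ∑ x'l : Xl, Pl x'l x a = 1)
    (hPn0 : ∀ x'n x a u, 0 ≤ Pn x'n x a u) (hPn1 : ∀ x a u, ∑ x'n : Xn, Pn x'n x a u = 1)
    (hΩ0 : ∀ o a x', 0 ≤ Ω o a x') (hΩ1 : ∀ a x', ∑ o : O, Ω o a x' = 1)
    (I : D → U → ℝ) (hI0 : ∀ d u, 0 ≤ I d u) (hI1 : ∀ d, ∑ u : U, I d u = 1)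
    (k : ℕ)
    (b : (Xl × Xn) × D → ℝ) (hb0 : ∀ p, 0 ≤ b p) (hb1 : ∑ p : (Xl × Xn) × D, b p = 1) :
    (⨆ π : List O → A, ∑ p : (Xl × Xn) × D, b p * nuI Pl Pn Ω δ r I k π p.1 p.2) ≤
      ⨆ π : List O → A, ∑ x : Xl × Xn, (∑ d : D, b (x, d)) * nuIO Pl Pn Ω r k π x := by
  obtain ⟨C, hC0, hC⟩ := nuIO_bounded_above Pl Pn Ω r hPl0 hPl1 hPn0 hPn1 hΩ0 hΩ1 k
  have hbIO1 : ∑ x : Xl × Xn, (∑ d : D, b (x, d)) = 1 := by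
    rw [← hb1]; exact (Fintype.sum_prod_type b).symm
  have hbdd : BddAbove (Set.range fun π : List O → A =>
      ∑ x : Xl × Xn, (∑ d : D, b (x, d)) * nuIO Pl Pn Ω r k π x) := by
    refine ⟨C, Set.forall_mem_range.2 fun π => ?_⟩
    calc (∑ x : Xl × Xn, (∑ d : D, b (x, d)) * nuIO Pl Pn Ω r k π x)
        ≤ ∑ x : Xl × Xn, (∑ d : D, b (x, d)) * C := by
          refine Finset.sum_le_sum fun x _ => ?_
          exact mul_le_mul_of_nonneg_left (hC _ _)
            (Finset.sum_nonneg fun d _ => hb0 _)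
      _ = C := by rw [← Finset.sum_mul, hbIO1, one_mul]
  haveI : Nonempty (List O → A) := ⟨fun _ => Classical.arbitrary A⟩
  refine ciSup_le fun π => ?_
  calc (∑ p : (Xl × Xn) × D, b p * nuI Pl Pn Ω δ r I k π p.1 p.2)
      ≤ ∑ p : (Xl × Xn) × D, b p * nuIO Pl Pn Ω r k π p.1 := by
        refine Finset.sum_le_sum fun p _ => ?_
        exact mul_le_mul_of_nonneg_left
          (nuI_le_nuIO_aux Pl Pn Ω δ r hPl0 hPn0 hΩ0 I hI0 hI1 k π p.1 p.2) (hb0 p)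
    _ = ∑ x : Xl × Xn, (∑ d : D, b (x, d)) * nuIO Pl Pn Ω r k π x := by
        rw [Fintype.sum_prod_type]
        exact Finset.sum_congr rfl fun x _ => by rw [Finset.sum_mul]
    _ ≤ _ := le_ciSup hbdd π

end LocalModel
end
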